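/- In the setting of the monotonicity lemma, for any T₀ < T₁: (1/2)∫_{T₀}^{T₁}⟨[S,A]f,f⟩ dt + ∫_{T₀}^{T₁}⟨ψ∂_t f,∂_t f⟩ dt + (1/2)∫_{T₀}^{T₁}‖Af‖² dt + Re∫_{T₀}^{T₁}⟨(S+A)f, ψf⟩ dt ≤ ∫_{T₀}^{T₁}‖(∂²_t - (S+A))f‖² dt + (1/2)∫_{T₀}^{T₁}⟨ψ²f,f⟩ dt + |Re(⟨Af,∂_t f⟩ + ⟨ψf,∂_t f⟩)|_{t=T₀}^{t=T₁}|. -/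

import Mathlib

open scoped InnerProductSpace
open intervalIntegral
open MeasureTheory (volume)

/-!
Put `B t = Re ⟪(A + ψ) f, f'⟫` and `g = f'' - (S + A) f`. Differentiating `B` and substituting
`f'' = g + (S + A) f`, skew-symmetry of `A` removes `Re ⟪A f', f'⟫` and turns `Re ⟪A f, S f⟫` into
`½ Re ⟪[S, A] f, f⟫`, so `B'` is the left-hand integrand plus `½ ‖A f‖² + Re ⟪A f + ψ f, g⟫`.
The cross term is absorbed by `‖g‖² + ½ ‖A f‖² + ½ ‖ψ f‖²`, where `‖ψ f‖² = ⟪ψ² f, f⟫`, and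
integrating `B'` over `[T₀, T₁]` produces the boundary term.
-/

section SkewSymmetric

variable {𝕜 E : Type*} [RCLike 𝕜] [NormedAddCommGroup E] [InnerProductSpace 𝕜 E]

open RCLike

theorem re_inner_self_eq_zero_of_skew {A : E →L[𝕜] E} (hA : ∀ x y, ⟪A x, y⟫_𝕜 = -⟪x, A y⟫_𝕜)
    (v : E) : re ⟪A v, v⟫_𝕜 = 0 := by
  have h := congrArg re (hA v v)
  rw [map_neg, inner_re_symm v] at h
  linarith

theorem re_inner_commutator_self {S A : E →L[𝕜] E} (hS : ∀ x y, ⟪S x, y⟫_𝕜 = ⟪x, S y⟫_𝕜)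
    (hA : ∀ x y, ⟪A x, y⟫_𝕜 = -⟪x, A y⟫_𝕜) (x : E) :
    re ⟪S (A x) - A (S x), x⟫_𝕜 = 2 * re ⟪A x, S x⟫_𝕜 := by
  rw [inner_sub_left, hS (A x), hA (S x), map_sub, map_neg, inner_re_symm (S x)]
  ring

theorem neg_re_inner_add_le (a b w : E) :
    -re ⟪a + b, w⟫_𝕜 ≤ ‖w‖ ^ 2 + 1 / 2 * ‖a‖ ^ 2 + 1 / 2 * ‖b‖ ^ 2 := by
  have ha := re_inner_le_norm (𝕜 := 𝕜) (-a) w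
  have hb := re_inner_le_norm (𝕜 := 𝕜) (-b) w
  rw [inner_neg_left, map_neg, norm_neg] at ha hb
  rw [inner_add_left, map_add]
  nlinarith [sq_nonneg (‖a‖ - ‖w‖), sq_nonneg (‖b‖ - ‖w‖)]

theorem carleman_integrand_le {S A ψ : E →L[𝕜] E} (hS : ∀ x y, ⟪S x, y⟫_𝕜 = ⟪x, S y⟫_𝕜)
    (hA : ∀ x y, ⟪A x, y⟫_𝕜 = -⟪x, A y⟫_𝕜) (hψ : ∀ x y, ⟪ψ x, y⟫_𝕜 = ⟪x, ψ y⟫_𝕜) (x v a : E) :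
    1 / 2 * re ⟪S (A x) - A (S x), x⟫_𝕜 + re ⟪ψ v, v⟫_𝕜 + 1 / 2 * ‖A x‖ ^ 2
        + re ⟪S x + A x, ψ x⟫_𝕜
      ≤ re ⟪(A + ψ) v, v⟫_𝕜 + re ⟪(A + ψ) x, a⟫_𝕜
        + (‖a - (S x + A x)‖ ^ 2 + 1 / 2 * re ⟪ψ (ψ x), x⟫_𝕜) := by
  set w := a - (S x + A x)
  have ha : a = w + (S x + A x) := (sub_add_cancel a _).symm
  have hψψ : re ⟪ψ (ψ x), x⟫_𝕜 = ‖ψ x‖ ^ 2 := by rw [hψ, inner_self_eq_norm_sq]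
  have hcross := neg_re_inner_add_le (𝕜 := 𝕜) (A x) (ψ x) w
  have hskew := re_inner_self_eq_zero_of_skew hA v
  have hcomm := re_inner_commutator_self hS hA x
  have hsymm := inner_re_symm (𝕜 := 𝕜) (ψ x) (S x + A x)
  rw [ha, add_apply, add_apply]
  simp only [inner_add_left, inner_add_right, map_add, inner_self_eq_norm_sq]
    at hcross hskew hcomm hsymm ⊢
  linarith

end SkewSymmetric

section Calculus

variable {𝕜 E : Type*} [RCLike 𝕜] [NormedAddCommGroup E] [InnerProductSpace 𝕜 E]
  [NormedSpace ℝ E] [IsScalarTower ℝ 𝕜 E]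

open RCLike

theorem HasDerivAt.re_inner_clm_apply (T : E →L[𝕜] E) {f g : ℝ → E} {f' g' : E} {t : ℝ}
    (hf : HasDerivAt f f' t) (hg : HasDerivAt g g' t) :
    HasDerivAt (fun s => re ⟪T (f s), g s⟫_𝕜) (re ⟪T f', g t⟫_𝕜 + re ⟪T (f t), g'⟫_𝕜) t := by
  have hTf := (T.restrictScalars ℝ).hasFDerivAt.comp_hasDerivAt t hf
  have h := reCLM.hasFDerivAt.comp_hasDerivAt t (hTf.inner 𝕜 hg)
  rw [reCLM_apply, map_add, add_comm] at h
  exact h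

end Calculus

theorem integral_le_sub_add_integral_of_le_deriv_add {p q B B' : ℝ → ℝ} {a b : ℝ} (hab : a ≤ b)
    (hB : ∀ t, HasDerivAt B (B' t) t) (hB' : IntervalIntegrable B' volume a b)
    (hp : IntervalIntegrable p volume a b)
    (hq : IntervalIntegrable q volume a b)
    (hle : ∀ t ∈ Set.Icc a b, p t ≤ B' t + q t) :
    ∫ t in a..b, p t ≤ B b - B a + ∫ t in a..b, q t :=
  calc ∫ t in a..b, p t ≤ ∫ t in a..b, B' t + q t := integral_mono_on hab hp (hB'.add hq) hle
    _ = B b - B a + ∫ t in a..b, q t := by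
      rw [integral_add hB' hq, integral_eq_sub_of_hasDerivAt (fun t _ => hB t) hB']

theorem stmt5_general {H : Type*} [NormedAddCommGroup H] [InnerProductSpace ℂ H]
    (S A ψ : H →L[ℂ] H)
    (hS : ∀ x y : H, ⟪S x, y⟫_ℂ = ⟪x, S y⟫_ℂ)
    (hA : ∀ x y : H, ⟪A x, y⟫_ℂ = -⟪x, A y⟫_ℂ)
    (hψ : ∀ x y : H, ⟪ψ x, y⟫_ℂ = ⟪x, ψ y⟫_ℂ)
    (f : ℝ → H) (hf : ContDiff ℝ 2 f)
    (T₀ T₁ : ℝ) (hT : T₀ < T₁) :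
    (1/2) * (∫ t in T₀..T₁, (⟪S (A (f t)) - A (S (f t)), f t⟫_ℂ).re)
      + (∫ t in T₀..T₁, (⟪ψ (deriv f t), deriv f t⟫_ℂ).re)
      + (1/2) * (∫ t in T₀..T₁, ‖A (f t)‖ ^ 2)
      + (∫ t in T₀..T₁, (⟪S (f t) + A (f t), ψ (f t)⟫_ℂ).re)
    ≤ (∫ t in T₀..T₁, ‖deriv (deriv f) t - (S (f t) + A (f t))‖ ^ 2)
      + (1/2) * (∫ t in T₀..T₁, (⟪ψ (ψ (f t)), f t⟫_ℂ).re)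
      + |((⟪A (f T₁), deriv f T₁⟫_ℂ + ⟪ψ (f T₁), deriv f T₁⟫_ℂ).re
          - (⟪A (f T₀), deriv f T₀⟫_ℂ + ⟪ψ (f T₀), deriv f T₀⟫_ℂ).re)| := by
  have hf₁ : ∀ t, HasDerivAt f (deriv f t) t := fun t =>
    (hf.differentiable two_ne_zero t).hasDerivAt
  have hf₂ : ∀ t, HasDerivAt (deriv f) (deriv (deriv f) t) t := fun t =>
    (hf.differentiable_deriv_two t).hasDerivAt
  have hf₀c : Continuous f := hf.continuous
  have hf₁c : Continuous (deriv f) := hf.continuous_deriv one_le_two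
  have hf₂c : Continuous (deriv (deriv f)) := (hf.deriv' (n := 1)).continuous_deriv_one
  have hint : ∀ {g : ℝ → ℝ}, Continuous g → IntervalIntegrable g volume T₀ T₁ :=
    fun hg => hg.intervalIntegrable _ _
  have key := integral_le_sub_add_integral_of_le_deriv_add hT.le
    (fun t => (hf₁ t).re_inner_clm_apply (A + ψ) (hf₂ t)) (hint (by fun_prop))
    (hint (by fun_prop)) (hint (by fun_prop))
    (fun t _ => carleman_integrand_le hS hA hψ (f t) (deriv f t) (deriv (deriv f) t))
  have hB : ∀ t, (⟪(A + ψ) (f t), deriv f t⟫_ℂ).re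
      = (⟪A (f t), deriv f t⟫_ℂ + ⟪ψ (f t), deriv f t⟫_ℂ).re := fun t => by
    rw [add_apply, inner_add_left]
  simp only [RCLike.re_to_complex] at key
  rw [hB, hB, integral_add, integral_add, integral_add, integral_const_mul, integral_const_mul,
    integral_add, integral_const_mul] at key
  · linarith [le_abs_self ((⟪A (f T₁), deriv f T₁⟫_ℂ + ⟪ψ (f T₁), deriv f T₁⟫_ℂ).re
      - (⟪A (f T₀), deriv f T₀⟫_ℂ + ⟪ψ (f T₀), deriv f T₀⟫_ℂ).re)]
  all_goals exact hint (by fun_prop)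

/-- Monotonicity (Carleman) estimate: for `S` symmetric, `A` skew-symmetric, `ψ` symmetric
bounded nonnegative, all time-independent, and `f : ℝ → H` of class `C²`, and `T₀ < T₁`,
`(1/2)∫⟨[S,A]f,f⟩ + ∫⟨ψ∂_tf,∂_tf⟩ + (1/2)∫‖Af‖² + Re∫⟨(S+A)f,ψf⟩
  ≤ ∫‖(∂²_t-(S+A))f‖² + (1/2)∫⟨ψ²f,f⟩ + |boundary|`. -/
theorem stmt5 {H : Type*} [NormedAddCommGroup H] [InnerProductSpace ℂ H] [CompleteSpace H]
    (S A ψ : H →L[ℂ] H)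
    (hS : ∀ x y : H, ⟪S x, y⟫_ℂ = ⟪x, S y⟫_ℂ)
    (hA : ∀ x y : H, ⟪A x, y⟫_ℂ = -⟪x, A y⟫_ℂ)
    (hψ : ∀ x y : H, ⟪ψ x, y⟫_ℂ = ⟪x, ψ y⟫_ℂ)
    (hψpos : ∀ v : H, 0 ≤ (⟪ψ v, v⟫_ℂ).re)
    (f : ℝ → H) (hf : ContDiff ℝ 2 f)
    (T₀ T₁ : ℝ) (hT : T₀ < T₁) :
    (1/2) * (∫ t in T₀..T₁, (⟪S (A (f t)) - A (S (f t)), f t⟫_ℂ).re)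
      + (∫ t in T₀..T₁, (⟪ψ (deriv f t), deriv f t⟫_ℂ).re)
      + (1/2) * (∫ t in T₀..T₁, ‖A (f t)‖ ^ 2)
      + (∫ t in T₀..T₁, (⟪S (f t) + A (f t), ψ (f t)⟫_ℂ).re)
    ≤ (∫ t in T₀..T₁, ‖deriv (deriv f) t - (S (f t) + A (f t))‖ ^ 2)
      + (1/2) * (∫ t in T₀..T₁, (⟪ψ (ψ (f t)), f t⟫_ℂ).re)
      + |((⟪A (f T₁), deriv f T₁⟫_ℂ + ⟪ψ (f T₁), deriv f T₁⟫_ℂ).re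
          - (⟪A (f T₀), deriv f T₀⟫_ℂ + ⟪ψ (f T₀), deriv f T₀⟫_ℂ).re)| :=
  stmt5_general S A ψ hS hA hψ f hf T₀ T₁ hT
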